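/- arXiv:1305.7489 — 2 statements merged into one kernel-verified Lean document; each statement's English description precedes it below -/
import Mathlib

section
/- Let d = 2 (or more generally d ≤ 2). For every unitary operator U on the symmetric subspace Sym²(ℂ^d) ⊂ ℂ^d ⊗ ℂ^d, there exist nonzero vectors v, w ∈ ℂ^d such that U(v ⊗ v) = w ⊗ w. In particular no bosonic universal entangler exists for d ≤ 2. -/
/-- The tensor product `v ⊗ w` of two vectors of `ℂ^n`, realized inside
`ℂ^n ⊗ ℂ^n ≅ ℂ^(n × n)` (with the induced inner product). -/
noncomputable def tp {n : Type*} [Fintype n] (v w : EuclideanSpace ℂ n) :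
    EuclideanSpace ℂ (n × n) :=
  WithLp.toLp 2 (fun p : n × n => v p.1 * w p.2)

/-- The symmetric subspace `Sym²(ℂ^n) ⊆ ℂ^n ⊗ ℂ^n`: the vectors fixed by the
swap `v ⊗ w ↦ w ⊗ v`. -/
noncomputable def symSub (n : Type*) [Fintype n] :
    Submodule ℂ (EuclideanSpace ℂ (n × n)) where
  carrier := {T | ∀ i j : n, T (i, j) = T (j, i)}
  add_mem' := by
    intro T S hT hS i j
    simp only [PiLp.add_apply, hT i j, hS i j]
  zero_mem' := by intro _ _; rfl
  smul_mem' := by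
    intro c T hT i j
    simp only [PiLp.smul_apply, hT i j]

/-- The bosonic product state `v ⊗ v` as an element of the symmetric subspace. -/
noncomputable def tpSym {n : Type*} [Fintype n] (v : EuclideanSpace ℂ n) :
    symSub n :=
  ⟨tp v v, fun i j => mul_comm (v i) (v j)⟩

lemma exists_sq (c : ℂ) : ∃ b : ℂ, b * b = c := by
  obtain ⟨b, hb⟩ := IsAlgClosed.exists_pow_nat_eq c (n := 2) (by norm_num)
  exact ⟨b, by rw [← sq]; exact hb⟩

lemma tp_apply {n : Type*} [Fintype n] (v w : EuclideanSpace ℂ n) (i j : n) :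
    tp v w (i, j) = v i * w j := rfl

lemma rank_one (T : EuclideanSpace ℂ (Fin 2 × Fin 2))
    (hsym : ∀ i j : Fin 2, T (i, j) = T (j, i)) (hT : T ≠ 0)
    (hdet : T (0,0) * T (1,1) - T (0,1) * T (1,0) = 0) :
    ∃ w : EuclideanSpace ℂ (Fin 2), w ≠ 0 ∧ T = tp w w := by
  have h10 : T (1,0) = T (0,1) := hsym 1 0
  by_cases h00 : T (0,0) = 0
  · have h01 : T (0,1) = 0 := by
      have : T (0,1) * T (0,1) = 0 := by linear_combination -hdet - T (0,1) * h10 + T (1,1) * h00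
      exact mul_self_eq_zero.mp this
    have h10' : T (1,0) = 0 := h10.trans h01
    have h11 : T (1,1) ≠ 0 := by
      intro h11
      apply hT
      refine PiLp.ext fun p => ?_
      obtain ⟨i, j⟩ := p
      fin_cases i <;> fin_cases j <;> assumption
    obtain ⟨b, hb⟩ := exists_sq (T (1,1))
    have hb0 : b ≠ 0 := by intro h; rw [h] at hb; exact h11 (by rw [← hb]; ring)
    refine ⟨!₂[0, b], ?_, ?_⟩
    · intro h
      have := congrArg (fun x : EuclideanSpace ℂ (Fin 2) => x 1) h
      simp at this
      exact hb0 this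
    · refine PiLp.ext fun p => ?_
      obtain ⟨i, j⟩ := p
      fin_cases i <;> fin_cases j
      · show T (0,0) = ![(0:ℂ), b] 0 * ![(0:ℂ), b] 0
        simpa using h00
      · show T (0,1) = ![(0:ℂ), b] 0 * ![(0:ℂ), b] 1
        simpa using h01
      · show T (1,0) = ![(0:ℂ), b] 1 * ![(0:ℂ), b] 0
        simpa using h10'
      · show T (1,1) = ![(0:ℂ), b] 1 * ![(0:ℂ), b] 1
        simpa using hb.symm
  · obtain ⟨a, ha⟩ := exists_sq (T (0,0))
    have ha0 : a ≠ 0 := by intro h; rw [h] at ha; exact h00 (by rw [← ha]; ring)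
    set q : ℂ := T (0,1) / a with hq
    refine ⟨!₂[a, q], ?_, ?_⟩
    · intro h
      have := congrArg (fun x : EuclideanSpace ℂ (Fin 2) => x 0) h
      simp at this
      exact ha0 this
    · refine PiLp.ext fun p => ?_
      obtain ⟨i, j⟩ := p
      fin_cases i <;> fin_cases j
      · show T (0,0) = ![a, q] 0 * ![a, q] 0
        simpa using ha.symm
      · show T (0,1) = ![a, q] 0 * ![a, q] 1
        simp [hq]
        rw [mul_div_assoc', mul_comm, mul_div_assoc, div_self ha0, mul_one]
      · show T (1,0) = ![a, q] 1 * ![a, q] 0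
        simp [hq]
        rw [h10, div_mul_cancel₀ _ ha0]
      · show T (1,1) = ![a, q] 1 * ![a, q] 1
        have key : T (1,1) * (a * a) = T (0,1) * T (0,1) := by
          linear_combination T (1,1) * ha + hdet + T (0,1) * h10
        simp [hq]
        rw [div_mul_div_comm, eq_div_iff (mul_ne_zero ha0 ha0)]
        linear_combination key

/-- off-diagonal symmetric basis vector -/
noncomputable def esym : symSub (Fin 2) :=
  ⟨(WithLp.toLp 2 (fun p : Fin 2 × Fin 2 => if p.1 = p.2 then (0:ℂ) else 1) : EuclideanSpace ℂ (Fin 2 × Fin 2)),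
    by intro i j; simp [eq_comm]⟩

lemma tpSym_line (t : ℂ) :
    tpSym (!₂[1, t] : EuclideanSpace ℂ (Fin 2)) =
      tpSym !₂[1, 0] + t • esym + t ^ 2 • tpSym !₂[0, 1] := by
  apply Subtype.ext
  refine PiLp.ext fun p => ?_
  obtain ⟨i, j⟩ := p
  have : ((tpSym (!₂[1,0] : EuclideanSpace ℂ (Fin 2)) + t • esym
      + t ^ 2 • tpSym !₂[0,1] : symSub (Fin 2)) : EuclideanSpace ℂ (Fin 2 × Fin 2)) (i, j)
      = tp !₂[1,0] !₂[1,0] (i,j) + t * (esym : EuclideanSpace ℂ (Fin 2 × Fin 2)) (i,j)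
        + t ^ 2 * tp !₂[0,1] !₂[0,1] (i,j) := by
    simp [tpSym]
  rw [this]
  fin_cases i <;> fin_cases j <;>
    · show tp _ _ (_, _) = tp _ _ (_, _) + t * _ + t ^ 2 * tp _ _ (_, _)
      simp [tp, esym]
      try ring

open Polynomial in
lemma exists_root_quartic (A B Cv : EuclideanSpace ℂ (Fin 2 × Fin 2))
    (hC : ¬ (Cv (0,0) * Cv (1,1) - Cv (0,1) * Cv (1,0) = 0)) :
    ∃ t : ℂ, (A (0,0) + t * B (0,0) + t^2 * Cv (0,0)) * (A (1,1) + t * B (1,1) + t^2 * Cv (1,1))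
      - (A (0,1) + t * B (0,1) + t^2 * Cv (0,1)) * (A (1,0) + t * B (1,0) + t^2 * Cv (1,0)) = 0 := by
  set p : Polynomial ℂ :=
    C (A (0,0) * A (1,1) - A (0,1) * A (1,0))
    + C (A (0,0) * B (1,1) + B (0,0) * A (1,1) - A (0,1) * B (1,0) - B (0,1) * A (1,0)) * X
    + C (A (0,0) * Cv (1,1) + B (0,0) * B (1,1) + Cv (0,0) * A (1,1)
        - A (0,1) * Cv (1,0) - B (0,1) * B (1,0) - Cv (0,1) * A (1,0)) * X ^ 2
    + C (B (0,0) * Cv (1,1) + Cv (0,0) * B (1,1) - B (0,1) * Cv (1,0) - Cv (0,1) * B (1,0)) * X ^ 3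
    + C (Cv (0,0) * Cv (1,1) - Cv (0,1) * Cv (1,0)) * X ^ 4 with hp
  have hc4 : p.coeff 4 = Cv (0,0) * Cv (1,1) - Cv (0,1) * Cv (1,0) := by
    rw [hp]
    simp only [coeff_add, coeff_C_mul, coeff_X_pow, coeff_C, coeff_X]
    norm_num
  have hdeg : 0 < p.degree :=
    lt_of_lt_of_le (by norm_num) (le_degree_of_ne_zero (n := 4) (by rw [hc4]; exact hC))
  obtain ⟨t0, ht0⟩ := Complex.exists_root hdeg
  have heval : eval t0 p = 0 := ht0
  rw [hp] at heval
  simp only [eval_add, eval_mul, eval_pow, eval_C, eval_X] at heval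
  exact ⟨t0, by linear_combination heval⟩

/-- For `d ≤ 2`, every unitary on `Sym²(ℂ^d)` maps some bosonic product state
`v ⊗ v` (with `v ≠ 0`) to a bosonic product state `w ⊗ w` (with `w ≠ 0`);
i.e., no bosonic universal entangler exists for `d ≤ 2`. -/
theorem no_bosonic_universal_entangler_of_dim_le_two (d : ℕ) (hd1 : 1 ≤ d) (hd2 : d ≤ 2)
    (U : symSub (Fin d) ≃ₗᵢ[ℂ] symSub (Fin d)) :
    ∃ v w : EuclideanSpace ℂ (Fin d), v ≠ 0 ∧ w ≠ 0 ∧ U (tpSym v) = tpSym w := by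
  interval_cases d
  · -- d = 1
    have hx : (tpSym (!₂[1] : EuclideanSpace ℂ (Fin 1))) ≠ 0 := by
      intro h
      have := congrArg (fun x : symSub (Fin 1) => (x : EuclideanSpace ℂ (Fin 1 × Fin 1)) (0, 0)) h
      simp [tpSym, tp] at this
    have hUx : U (tpSym !₂[1]) ≠ 0 := fun h => hx (by simpa using U.map_eq_zero_iff.mp h)
    have hT0 : ((U (tpSym !₂[1]) : symSub (Fin 1)) : EuclideanSpace ℂ (Fin 1 × Fin 1)) (0,0) ≠ 0 := by
      intro h
      apply hUx
      apply Subtype.ext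
      refine PiLp.ext fun p => ?_
      rw [Subsingleton.elim p ((0 : Fin 1), (0 : Fin 1))]
      exact h
    obtain ⟨b, hb⟩ := exists_sq (((U (tpSym !₂[1]) : symSub (Fin 1)) : EuclideanSpace ℂ (Fin 1 × Fin 1)) (0,0))
    have hb0 : b ≠ 0 := by intro h; rw [h] at hb; exact hT0 (by rw [← hb]; ring)
    refine ⟨!₂[1], !₂[b], ?_, ?_, ?_⟩
    · intro h; have := congrArg (fun x : EuclideanSpace ℂ (Fin 1) => x 0) h; simp at this
    · intro h; have := congrArg (fun x : EuclideanSpace ℂ (Fin 1) => x 0) h; simp at this; exact hb0 this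
    · apply Subtype.ext
      refine PiLp.ext fun p => ?_
      rw [Subsingleton.elim p ((0 : Fin 1), (0 : Fin 1))]
      show _ = tp (!₂[b]) (!₂[b]) (0, 0)
      rw [tp_apply]
      simpa using hb.symm
  · -- d = 2
    set A : EuclideanSpace ℂ (Fin 2 × Fin 2) := ((U (tpSym !₂[1, 0]) : symSub (Fin 2)) : EuclideanSpace ℂ (Fin 2 × Fin 2)) with hA
    set B : EuclideanSpace ℂ (Fin 2 × Fin 2) := ((U esym : symSub (Fin 2)) : EuclideanSpace ℂ (Fin 2 × Fin 2)) with hB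
    set Cv : EuclideanSpace ℂ (Fin 2 × Fin 2) := ((U (tpSym !₂[0, 1]) : symSub (Fin 2)) : EuclideanSpace ℂ (Fin 2 × Fin 2)) with hCv
    have hne : ∀ v : EuclideanSpace ℂ (Fin 2), ∀ i j : Fin 2, v i * v j ≠ 0 →
        ((U (tpSym v) : symSub (Fin 2)) : EuclideanSpace ℂ (Fin 2 × Fin 2)) ≠ 0 := by
      intro v i j hvij h
      have h0 : U (tpSym v) = 0 := Subtype.ext h
      have : tpSym v = 0 := U.map_eq_zero_iff.mp h0
      have := congrArg (fun x : symSub (Fin 2) => (x : EuclideanSpace ℂ (Fin 2 × Fin 2)) (i, j)) this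
      exact hvij this
    by_cases hC : Cv (0,0) * Cv (1,1) - Cv (0,1) * Cv (1,0) = 0
    · -- v = (0,1) already works
      obtain ⟨w, hw0, hw⟩ := rank_one Cv (U (tpSym !₂[0, 1])).2
        (hne !₂[0,1] 1 1 (by norm_num)) hC
      refine ⟨!₂[0, 1], w, ?_, hw0, Subtype.ext hw⟩
      intro h; have := congrArg (fun x : EuclideanSpace ℂ (Fin 2) => x 1) h; simp at this
    · obtain ⟨t0, ht0⟩ := exists_root_quartic A B Cv hC
      have hcoord : ∀ p : Fin 2 × Fin 2,
          ((U (tpSym (!₂[1, t0] : EuclideanSpace ℂ (Fin 2))) : symSub (Fin 2)) :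
            EuclideanSpace ℂ (Fin 2 × Fin 2)) p = A p + t0 * B p + t0 ^ 2 * Cv p := by
        intro p
        rw [tpSym_line, map_add, map_add, map_smul, map_smul]
        simp [hA, hB, hCv]
      set T : EuclideanSpace ℂ (Fin 2 × Fin 2) :=
        ((U (tpSym (!₂[1, t0] : EuclideanSpace ℂ (Fin 2))) : symSub (Fin 2)) :
          EuclideanSpace ℂ (Fin 2 × Fin 2)) with hT
      have hdet : T (0,0) * T (1,1) - T (0,1) * T (1,0) = 0 := by
        rw [hcoord, hcoord, hcoord, hcoord]
        linear_combination ht0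
      obtain ⟨w, hw0, hw⟩ := rank_one T (U (tpSym !₂[1, t0])).2
        (hne !₂[1, t0] 0 0 (by norm_num)) hdet
      refine ⟨!₂[1, t0], w, ?_, hw0, Subtype.ext hw⟩
      intro h; have := congrArg (fun x : EuclideanSpace ℂ (Fin 2) => x 0) h; simp at this
end

section
/- Let d ≥ 5, index the standard basis (e_i) of ℂ^d cyclically by i ∈ ℤ/dℤ, and let S ⊂ Sym²(ℂ^d) be the linear span of the d vectors s_i = e_i ⊗ e_i + e_{i+1} ⊗ e_{i+2} + e_{i+2} ⊗ e_{i+1}, i ∈ ℤ/dℤ. Let P_S be the orthogonal projection of Sym²(ℂ^d) onto S. Then the Householder unitary U = I − 2·P_S on Sym²(ℂ^d) is a bosonic universal entangler: for every nonzero v ∈ ℂ^d and every w ∈ ℂ^d, U(v ⊗ v) ≠ w ⊗ w. -/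
/-- (Re-registration of the standard instance, with high priority, to speed up
instance resolution.) -/
noncomputable instance (priority := 10000) euclideanInnerInst (n : Type*) [Fintype n] :
    InnerProductSpace ℂ (EuclideanSpace ℂ n) := by infer_instance

lemma tp_swap_mem {n : Type*} [Fintype n] (a b : EuclideanSpace ℂ n) :
    tp a b + tp b a ∈ symSub n := by
  intro i j
  show a i * b j + b i * a j = a j * b i + b j * a i
  ring

/-- The standard basis vector `e_i` of `ℂ^d`, indexed cyclically by `ZMod d`. -/
noncomputable def e {d : ℕ} [NeZero d] (i : ZMod d) : EuclideanSpace ℂ (ZMod d) :=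
  EuclideanSpace.single i 1

/-- The vector `s_i = e_i ⊗ e_i + e_{i+1} ⊗ e_{i+2} + e_{i+2} ⊗ e_{i+1}` as an
element of `Sym²(ℂ^d)`. -/
noncomputable def sSym (d : ℕ) [NeZero d] (i : ZMod d) : symSub (ZMod d) :=
  ⟨tp (e i) (e i) + (tp (e (i + 1)) (e (i + 2)) + tp (e (i + 2)) (e (i + 1))),
    (symSub (ZMod d)).add_mem (tpSym (e i)).2 (tp_swap_mem _ _)⟩

open Finset

lemma zmod_ncast_ne_zero (d n : ℕ) (h0 : 0 < n) (hn : n < d) : ((n : ℕ) : ZMod d) ≠ 0 := by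
  intro h
  have := (ZMod.natCast_eq_zero_iff n d).mp h
  have := Nat.le_of_dvd h0 this
  omega

lemma two_ne (d : ℕ) (hd : 5 ≤ d) :
    (2 : ZMod d) ≠ 0 ∧ (2 : ZMod d) ≠ 1 ∧ (2 : ZMod d) ≠ -1 := by
  have h1 : ((1:ℕ) : ZMod d) ≠ 0 := zmod_ncast_ne_zero d 1 one_pos (by omega)
  have h2 : ((2:ℕ) : ZMod d) ≠ 0 := zmod_ncast_ne_zero d 2 two_pos (by omega)
  have h3 : ((3:ℕ) : ZMod d) ≠ 0 := zmod_ncast_ne_zero d 3 (by omega) (by omega)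
  push_cast at h1 h2 h3
  refine ⟨h2, ?_, ?_⟩
  · intro h; apply h1; linear_combination h
  · intro h; apply h3; linear_combination h

lemma three_ne (d : ℕ) (hd : 5 ≤ d) :
    (3 : ZMod d) ≠ 0 ∧ (3 : ZMod d) ≠ 1 ∧ (3 : ZMod d) ≠ -1 := by
  have h2 : ((2:ℕ) : ZMod d) ≠ 0 := zmod_ncast_ne_zero d 2 two_pos (by omega)
  have h3 : ((3:ℕ) : ZMod d) ≠ 0 := zmod_ncast_ne_zero d 3 (by omega) (by omega)
  have h4 : ((4:ℕ) : ZMod d) ≠ 0 := zmod_ncast_ne_zero d 4 (by omega) (by omega)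
  push_cast at h2 h3 h4
  refine ⟨h3, ?_, ?_⟩
  · intro h; apply h2; linear_combination h
  · intro h; apply h4; linear_combination h

section alg
variable {d : ℕ} [NeZero d]

/-- Case I: some index has `a j ≠ 0` but `b j = 0`: contradiction. -/
lemma caseI (hd : 5 ≤ d) (a b : ZMod d → ℂ)
    (hE : ∀ j : ZMod d,
      2 * a j ^ 2 = -(a (j+1) * a (j+2)) - 3 * (b (j+1) * b (j+2)) ∧
      2 * b j ^ 2 = -3 * (a (j+1) * a (j+2)) - (b (j+1) * b (j+2)))
    (hA : ∀ j k : ZMod d, k - j ≠ 0 → k - j ≠ 1 → k - j ≠ -1 → a j * a k = b j * b k)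
    (j : ZMod d) (ha : a j ≠ 0) (hb : b j = 0) : False := by
  obtain ⟨h20, h21, h2m⟩ := two_ne d hd
  obtain ⟨h30, h31, h3m⟩ := three_ne d hd
  have hav : ∀ k : ZMod d, k - j ≠ 0 → k - j ≠ 1 → k - j ≠ -1 → a k = 0 := by
    intro k h0 h1 hm
    have := hA j k h0 h1 hm
    rw [hb, zero_mul] at this
    exact (mul_eq_zero.mp this).resolve_left ha
  have ha2 : a (j + 2) = 0 := hav _
    (fun h => h20 (by linear_combination h)) (fun h => h21 (by linear_combination h))
    (fun h => h2m (by linear_combination h))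
  have hY : b (j+1) * b (j+2) ≠ 0 := by
    intro h
    have h1 := (hE j).1
    rw [ha2, mul_zero, h] at h1
    apply ha
    have : a j ^ 2 = 0 := by linear_combination h1 / 2
    exact pow_eq_zero_iff two_ne_zero |>.mp this
  have hb2 : b (j + 2) ≠ 0 := fun h => hY (by rw [h, mul_zero])
  have hbv : ∀ k : ZMod d, k - (j+2) ≠ 0 → k - (j+2) ≠ 1 → k - (j+2) ≠ -1 → b k = 0 := by
    intro k h0 h1 hm
    have := hA (j+2) k h0 h1 hm
    rw [ha2, zero_mul] at this
    exact (mul_eq_zero.mp this.symm).resolve_left hb2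
  have ha3 : a (j + 3) = 0 := hav _
    (fun h => h30 (by linear_combination h)) (fun h => h31 (by linear_combination h))
    (fun h => h3m (by linear_combination h))
  have hb4 : b (j + 4) = 0 := hbv _
    (fun h => h20 (by linear_combination h)) (fun h => h21 (by linear_combination h))
    (fun h => h2m (by linear_combination h))
  have h2 := (hE (j+2)).2
  have e1 : j + 2 + 1 = j + 3 := by ring
  have e2 : j + 2 + 2 = j + 4 := by ring
  rw [e1, e2, ha3, hb4, zero_mul, mul_zero] at h2
  apply hb2
  have : b (j+2) ^ 2 = 0 := by linear_combination h2 / 2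
  exact pow_eq_zero_iff two_ne_zero |>.mp this

/-- Main algebra lemma. -/
lemma mainalg (hd : 5 ≤ d) (a b : ZMod d → ℂ)
    (hE : ∀ j : ZMod d,
      2 * a j ^ 2 = -(a (j+1) * a (j+2)) - 3 * (b (j+1) * b (j+2)) ∧
      2 * b j ^ 2 = -3 * (a (j+1) * a (j+2)) - (b (j+1) * b (j+2)))
    (hA : ∀ j k : ZMod d, k - j ≠ 0 → k - j ≠ 1 → k - j ≠ -1 → a j * a k = b j * b k) :
    a = 0 := by
  obtain ⟨h20, h21, h2m⟩ := two_ne d hd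
  obtain ⟨h30, h31, h3m⟩ := three_ne d hd
  by_contra hne
  have hiff : ∀ j, a j = 0 ↔ b j = 0 := by
    intro j
    constructor
    · intro h
      by_contra hbj
      exact caseI hd b a
        (fun i => ⟨by linear_combination (hE i).2, by linear_combination (hE i).1⟩)
        (fun i k h0 h1 hm => (hA i k h0 h1 hm).symm) j hbj h
    · intro h
      by_contra haj
      exact caseI hd a b hE hA j haj h
  obtain ⟨j0, hj0⟩ : ∃ j, a j ≠ 0 := by
    by_contra h
    push_neg at h
    exact hne (funext fun j => h j)
  have hstep : ∀ j, a j ≠ 0 → a (j+1) ≠ 0 := by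
    intro j hj
    intro hc
    have h1 := (hE j).1
    have hX : a (j+1) * a (j+2) = 0 := by rw [hc, zero_mul]
    have hYv : b (j+1) * b (j+2) = 0 := by rw [(hiff _).mp hc, zero_mul]
    rw [hX, hYv] at h1
    apply hj
    have : a j ^ 2 = 0 := by linear_combination h1 / 2
    exact pow_eq_zero_iff two_ne_zero |>.mp this
  have hallN : ∀ n : ℕ, a (j0 + n) ≠ 0 := by
    intro n
    induction n with
    | zero => simpa using hj0
    | succ m ih =>
        have := hstep _ ih
        have e : j0 + m + 1 = j0 + (m+1 : ℕ) := by push_cast; ring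
        rwa [e] at this
  have hall : ∀ k : ZMod d, a k ≠ 0 := by
    intro k
    have h := hallN (k - j0).val
    rw [ZMod.natCast_rightInverse (k - j0)] at h
    have e : j0 + (k - j0) = k := by ring
    rwa [e] at h
  have hballn : ∀ k : ZMod d, b k ≠ 0 := fun k h => hall k ((hiff k).mpr h)
  have gap2 : ∀ j : ZMod d, a j * a (j+2) = b j * b (j+2) := by
    intro j
    exact hA j (j+2)
      (fun h => h20 (by linear_combination h)) (fun h => h21 (by linear_combination h))
      (fun h => h2m (by linear_combination h))
  have gap3 : ∀ j : ZMod d, a j * a (j+3) = b j * b (j+3) := by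
    intro j
    exact hA j (j+3)
      (fun h => h30 (by linear_combination h)) (fun h => h31 (by linear_combination h))
      (fun h => h3m (by linear_combination h))
  have hstar : ∀ j : ZMod d, a j * b (j+1) = b j * a (j+1) := by
    intro j
    have h1 := gap3 j
    have h2 := gap2 (j+1)
    have e : j + 1 + 2 = j + 3 := by ring
    rw [e] at h2
    have key : (a (j+3) * b (j+3)) * (a j * b (j+1)) = (a (j+3) * b (j+3)) * (b j * a (j+1)) := by
      linear_combination (b (j+1) * b (j+3)) * h1 - (b j * b (j+3)) * h2
    exact mul_left_cancel₀ (mul_ne_zero (hall _) (hballn _)) key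
  have hsq : ∀ j : ZMod d, a j ^ 2 = b j ^ 2 := by
    intro j
    have h1 := gap2 j
    -- a j * b (j+2) = b j * a (j+2) :
    have h2 : a j * b (j+2) = b j * a (j+2) := by
      have s1 := hstar j
      have s2 := hstar (j+1)
      have e : j + 1 + 1 = j + 2 := by ring
      rw [e] at s2
      have key : (a (j+1) * b (j+1)) * (a j * b (j+2)) = (a (j+1) * b (j+1)) * (b j * a (j+2)) := by
        linear_combination (a (j+1) * b (j+2)) * s1 + (b j * a (j+1)) * s2
      exact mul_left_cancel₀ (mul_ne_zero (hall _) (hballn _)) key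
    have key : (a (j+2) * b (j+2)) * (a j ^ 2) = (a (j+2) * b (j+2)) * (b j ^ 2) := by
      linear_combination (a j * b (j+2)) * h1 + (b j * b (j+2)) * h2
    exact mul_left_cancel₀ (mul_ne_zero (hall _) (hballn _)) key
  have hY : ∀ j : ZMod d, b (j+1) * b (j+2) = a (j+1) * a (j+2) := by
    intro j
    have s := hstar (j+1)
    have e : j + 1 + 1 = j + 2 := by ring
    rw [e] at s
    have hq := hsq (j+1)
    have key : a (j+1) * (b (j+1) * b (j+2)) = a (j+1) * (a (j+1) * a (j+2)) := by
      linear_combination b (j+1) * s - a (j+2) * hq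
    exact mul_left_cancel₀ (hall _) key
  have hrec : ∀ j : ZMod d, a j ^ 2 = -2 * (a (j+1) * a (j+2)) := by
    intro j
    have h1 := (hE j).1
    rw [hY j] at h1
    linear_combination h1 / 2
  -- product over all indices
  have hprod : ∏ j : ZMod d, a j ^ 2 = (-2 : ℂ) ^ d * ∏ j : ZMod d, (a (j+1) * a (j+2)) := by
    rw [Finset.prod_congr rfl (fun j _ => hrec j), Finset.prod_mul_distrib]
    congr 1
    rw [Finset.prod_const]
    congr 1
    simp [ZMod.card]
  have sh1 : ∏ j : ZMod d, a (j+1) = ∏ j : ZMod d, a j :=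
    Fintype.prod_equiv (Equiv.addRight (1 : ZMod d)) _ _ (fun j => rfl)
  have sh2 : ∏ j : ZMod d, a (j+2) = ∏ j : ZMod d, a j :=
    Fintype.prod_equiv (Equiv.addRight (2 : ZMod d)) _ _ (fun j => rfl)
  have hPa : (∏ j : ZMod d, a j) ≠ 0 := Finset.prod_ne_zero_iff.mpr (fun j _ => hall j)
  rw [Finset.prod_mul_distrib, sh1, sh2, Finset.prod_pow] at hprod
  have h1 : (∏ j : ZMod d, a j) ^ 2 = (-2 : ℂ) ^ d * (∏ j : ZMod d, a j) ^ 2 := by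
    linear_combination hprod
  have h2 : ((-2 : ℂ) ^ d) = 1 := by
    have := mul_right_cancel₀ (pow_ne_zero 2 hPa) (h1.symm.trans (one_mul _).symm)
    linear_combination this
  have h3 : ‖(-2 : ℂ) ^ d‖ = 1 := by rw [h2]; simp
  rw [norm_pow] at h3
  have h4 : ‖(-2 : ℂ)‖ = 2 := by simp
  rw [h4] at h3
  have h5 : (1:ℝ) < 2 ^ d := one_lt_pow₀ one_lt_two (by omega)
  rw [h3] at h5
  exact lt_irrefl _ h5
end alg

section plumbing
variable {d : ℕ} [NeZero d]

lemma inner_tp_e (aI bI : ZMod d) (z : EuclideanSpace ℂ (ZMod d × ZMod d)) :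
    (inner ℂ (tp (e aI) (e bI)) z : ℂ) = z (aI, bI) := by
  rw [PiLp.inner_apply]
  have h : ∀ p : ZMod d × ZMod d,
      (inner ℂ (tp (e aI) (e bI) p) (z p) : ℂ) = if p = (aI, bI) then z p else 0 := by
    intro p
    rw [RCLike.inner_apply']
    show (starRingEnd ℂ) (e aI p.1 * e bI p.2) * z p = _
    unfold e
    rw [EuclideanSpace.single_apply, EuclideanSpace.single_apply]
    rcases eq_or_ne p.1 aI with h1 | h1
    · rcases eq_or_ne p.2 bI with h2 | h2
      · have : p = (aI, bI) := Prod.ext h1 h2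
        simp [h1, h2, this]
      · have : p ≠ (aI, bI) := fun hp => h2 (by rw [hp])
        simp [h1, h2, this]
    · have : p ≠ (aI, bI) := fun hp => h1 (by rw [hp])
      simp [h1, this]
  rw [Finset.sum_congr rfl (fun p _ => h p), Finset.sum_ite_eq' Finset.univ (aI, bI) z]
  simp

lemma proj_eval (p : ZMod d × ZMod d) (z : EuclideanSpace ℂ (ZMod d × ZMod d)) :
    EuclideanSpace.proj p z = z p := rfl

lemma ite_pair_zero (j k x y : ZMod d) (h : k - j ≠ y - x) :
    (if j = x then (1:ℂ) else 0) * (if k = y then 1 else 0) = 0 := by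
  rcases eq_or_ne j x with hj | hj
  · rcases eq_or_ne k y with hk | hk
    · exact absurd (by rw [hj, hk]) h
    · simp [hk]
  · simp [hj]

lemma sSym_coe_apply (i : ZMod d) (j k : ZMod d) :
    ((sSym d i : EuclideanSpace ℂ (ZMod d × ZMod d))) (j, k) =
      (if j = i then (1:ℂ) else 0) * (if k = i then 1 else 0) +
      ((if j = i + 1 then (1:ℂ) else 0) * (if k = i + 2 then 1 else 0) +
       (if j = i + 2 then (1:ℂ) else 0) * (if k = i + 1 then 1 else 0)) := by
  have hco : ((sSym d i : EuclideanSpace ℂ (ZMod d × ZMod d))) =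
      tp (e i) (e i) + (tp (e (i+1)) (e (i+2)) + tp (e (i+2)) (e (i+1))) := rfl
  rw [hco, PiLp.add_apply, PiLp.add_apply]
  unfold tp e
  simp [EuclideanSpace.single_apply]
end plumbing

/-- For `d ≥ 5`, with `S ⊆ Sym²(ℂ^d)` the span of the vectors
`s_i = e_i ⊗ e_i + e_{i+1} ⊗ e_{i+2} + e_{i+2} ⊗ e_{i+1}` (`i ∈ ℤ/dℤ`),
the Householder unitary `U = I - 2 P_S` on `Sym²(ℂ^d)` is a bosonic universal
entangler. -/
theorem householder_explicit_is_bosonic_universal_entangler (d : ℕ) [NeZero d]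
    (hd : 5 ≤ d) :
    ∀ v : EuclideanSpace ℂ (ZMod d), v ≠ 0 →
      ∀ w : EuclideanSpace ℂ (ZMod d),
        (ContinuousLinearMap.id ℂ (symSub (ZMod d))
            - 2 • ((Submodule.span ℂ (Set.range (sSym d))).subtypeL
                ∘L Submodule.orthogonalProjection (Submodule.span ℂ (Set.range (sSym d)))))
          (tpSym v) ≠ tpSym w := by
  intro v hv w hUv
  set K := Submodule.span ℂ (Set.range (sSym d)) with hK
  simp only [ContinuousLinearMap.sub_apply, ContinuousLinearMap.smul_apply,
    ContinuousLinearMap.id_apply, ContinuousLinearMap.comp_apply,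
    Submodule.subtypeL_apply] at hUv
  set x := tpSym v with hx
  set y := tpSym w with hy
  set p : K := Submodule.orthogonalProjection K x with hp
  have hmem1 : x - y ∈ K := by
    have h2 : x - y = (p : symSub (ZMod d)) + (p : symSub (ZMod d)) := by
      rw [← hUv, two_smul]; abel
    rw [h2]; exact add_mem p.2 p.2
  have hmem2 : x + y ∈ Kᗮ := by
    have h3 : x + y = (x - (p : symSub (ZMod d))) + (x - (p : symSub (ZMod d))) := by
      rw [← hUv, two_smul]; abel
    rw [h3]
    exact add_mem (K.sub_starProjection_mem_orthogonal x)
      (K.sub_starProjection_mem_orthogonal x)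
  -- orthogonality equations
  have horth : ∀ i : ZMod d,
      (inner ℂ ((sSym d i : symSub (ZMod d)) : EuclideanSpace ℂ (ZMod d × ZMod d))
        ((x + y : symSub (ZMod d)) : EuclideanSpace ℂ (ZMod d × ZMod d)) : ℂ) = 0 := by
    intro i
    have h := (Submodule.mem_orthogonal K _).mp hmem2 (sSym d i)
      (Submodule.subset_span (Set.mem_range_self i))
    rwa [Submodule.coe_inner] at h
  have hCs : ∀ i : ZMod d,
      v i * v i + w i * w i +
        ((v (i+1) * v (i+2) + w (i+1) * w (i+2)) +
         (v (i+2) * v (i+1) + w (i+2) * w (i+1))) = 0 := by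
    intro i
    have h := horth i
    have hxyco : ((x + y : symSub (ZMod d)) : EuclideanSpace ℂ (ZMod d × ZMod d)) =
        tp v v + tp w w := rfl
    have hco : ((sSym d i : symSub (ZMod d)) : EuclideanSpace ℂ (ZMod d × ZMod d)) =
        tp (e i) (e i) + (tp (e (i+1)) (e (i+2)) + tp (e (i+2)) (e (i+1))) := rfl
    rw [hxyco, hco, inner_add_left, inner_add_left, inner_tp_e, inner_tp_e, inner_tp_e] at h
    have hval : ∀ j k : ZMod d, (tp v v + tp w w) (j, k) = v j * v k + w j * w k := by
      intro j k; rw [PiLp.add_apply]; rfl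
    rw [hval, hval, hval] at h
    linear_combination h
  -- span equations
  obtain ⟨c, hc⟩ := (Submodule.mem_span_range_iff_exists_fun ℂ).mp hmem1
  have hc1 : ∑ i : ZMod d, c i • ((sSym d i : symSub (ZMod d)) : EuclideanSpace ℂ (ZMod d × ZMod d))
      = tp v v - tp w w := by
    have h := congrArg ((symSub (ZMod d)).subtype) hc
    rw [map_sum] at h
    simp only [map_smul] at h
    exact h
  have hF : ∀ j k : ZMod d,
      ∑ i : ZMod d, c i * ((sSym d i : symSub (ZMod d)) : EuclideanSpace ℂ (ZMod d × ZMod d)) (j, k)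
        = v j * v k - w j * w k := by
    intro j k
    have h := congrArg (EuclideanSpace.proj ((j, k) : ZMod d × ZMod d)) hc1
    rw [map_sum] at h
    simp only [map_smul, smul_eq_mul] at h
    have hr : EuclideanSpace.proj ((j, k) : ZMod d × ZMod d) (tp v v - tp w w)
        = v j * v k - w j * w k := by
      rw [proj_eval, PiLp.sub_apply]; rfl
    rw [hr] at h
    exact h
  -- facts about small numbers in ZMod d
  have h10 : (1 : ZMod d) ≠ 0 := by
    have := zmod_ncast_ne_zero d 1 one_pos (by omega); simpa using this
  obtain ⟨h20, h21, h2m⟩ := two_ne d hd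
  -- off-band equations
  have hA : ∀ j k : ZMod d, k - j ≠ 0 → k - j ≠ 1 → k - j ≠ -1 → v j * v k = w j * w k := by
    intro j k h0 h1 hm
    have h := hF j k
    rw [Finset.sum_eq_zero] at h
    · linear_combination -h
    · intro i _
      rw [sSym_coe_apply, ite_pair_zero j k i i (by simpa using h0),
        ite_pair_zero j k (i+1) (i+2) (fun hh => h1 (hh.trans (by ring))),
        ite_pair_zero j k (i+2) (i+1) (fun hh => hm (hh.trans (by ring)))]
      ring
  -- diagonal equations
  have hdiag : ∀ j : ZMod d, v j * v j - w j * w j = c j := by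
    intro j
    have h := hF j j
    rw [Finset.sum_congr rfl (fun i _ => ?_), Finset.sum_ite_eq' Finset.univ j c] at h
    · simpa using h.symm
    · show c i * _ = if i = j then c i else 0
      rw [sSym_coe_apply,
        ite_pair_zero j j (i+1) (i+2) (fun hh => h10 (by linear_combination -hh)),
        ite_pair_zero j j (i+2) (i+1) (fun hh => h10 (by linear_combination hh))]
      rcases eq_or_ne i j with hij | hij
      · subst hij; simp
      · simp [Ne.symm hij, hij]
  -- off-diagonal equations
  have hoff : ∀ j : ZMod d, v (j+1) * v (j+2) - w (j+1) * w (j+2) = c j := by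
    intro j
    have h := hF (j+1) (j+2)
    rw [Finset.sum_congr rfl (fun i _ => ?_), Finset.sum_ite_eq' Finset.univ j c] at h
    · simpa using h.symm
    · show c i * _ = if i = j then c i else 0
      rw [sSym_coe_apply,
        ite_pair_zero (j+1) (j+2) i i (fun hh => h10 (by linear_combination hh)),
        ite_pair_zero (j+1) (j+2) (i+2) (i+1) (fun hh => h20 (by linear_combination hh))]
      rcases eq_or_ne i j with hij | hij
      · subst hij; simp
      · have h1 : j + 1 ≠ i + 1 := fun hh => hij (by linear_combination -hh)
        simp [h1, hij]
  -- the two master equations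
  have hEall : ∀ j : ZMod d,
      2 * v j ^ 2 = -(v (j+1) * v (j+2)) - 3 * (w (j+1) * w (j+2)) ∧
      2 * w j ^ 2 = -3 * (v (j+1) * v (j+2)) - (w (j+1) * w (j+2)) := by
    intro j
    constructor
    · linear_combination hCs j + hdiag j - hoff j
    · linear_combination hCs j - hdiag j + hoff j
  have hva := mainalg hd (fun j => v j) (fun j => w j) hEall hA
  exact hv (PiLp.ext fun j => congrFun hva j)
end
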